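/- Every Hilbert C*-module over the C*-algebra ℂ^{m×m} of m×m complex matrices possesses an orthonormal basis, i.e., an orthonormal system whose A-linear span is dense. -/

import Mathlib

/-! Zorn's lemma gives a maximal orthonormal system `S`. The trace form `tr ⟨u, v⟩` makes `M` a
complex inner product space whose norm is equivalent to the given one, since
`‖⟨u, u⟩‖ ≤ tr ⟨u, u⟩ ≤ m ‖⟨u, u⟩‖`; so it is a Hilbert space, and the span of `S` is dense once
its orthogonal complement vanishes. A nonzero `v` in that complement satisfies `⟨q, v⟩ = 0` for
all `q ∈ S`, and since `⟨v, v⟩` is a nonzero positive matrix, `⟨v c, v c⟩ = cᴴ ⟨v, v⟩ c` is a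
rank-one projection for a suitable `c`; adding `v c` to `S` contradicts maximality. -/

open scoped Matrix.Norms.L2Operator ComplexOrder

/-- A Hilbert C*-module over the C*-algebra `ℂ^{m×m}` of `m × m` complex matrices (with the
operator norm): a right module with a matrix-valued inner product inducing the norm of `M`. -/
structure HilbertModuleMat (m : ℕ) (M : Type*) [NormedAddCommGroup M] where
  smul : M → Matrix (Fin m) (Fin m) ℂ → M
  inner : M → M → Matrix (Fin m) (Fin m) ℂ
  smul_add_vec : ∀ (u v : M) c, smul (u + v) c = smul u c + smul v c
  smul_add_alg : ∀ (u : M) c d, smul u (c + d) = smul u c + smul u d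
  smul_mul : ∀ (u : M) c d, smul u (c * d) = smul (smul u c) d
  smul_one : ∀ u : M, smul u 1 = u
  inner_add_right : ∀ u v w : M, inner u (v + w) = inner u v + inner u w
  inner_smul_right : ∀ (u v : M) c, inner u (smul v c) = inner u v * c
  inner_conj : ∀ u v : M, inner v u = star (inner u v)
  inner_self_posSemidef : ∀ u : M, (inner u u).PosSemidef
  inner_definite : ∀ u : M, inner u u = 0 → u = 0
  norm_eq : ∀ u : M, ‖u‖ = Real.sqrt ‖inner u u‖

/-- A vector `q` is *normalized* if `⟨q,q⟩` is a nonzero idempotent. -/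
def HilbertModuleMat.Normalized {m : ℕ} {M : Type*} [NormedAddCommGroup M]
    (h : HilbertModuleMat m M) (q : M) : Prop :=
  h.inner q q ≠ 0 ∧ h.inner q q * h.inner q q = h.inner q q

/-- The set of finite right `ℂ^{m×m}`-linear combinations of elements of `S`. -/
def matLinSpan {m : ℕ} {M : Type*} [NormedAddCommGroup M] (h : HilbertModuleMat m M)
    (S : Set M) : Set M :=
  {v : M | ∃ (n : ℕ) (u : Fin n → M) (c : Fin n → Matrix (Fin m) (Fin m) ℂ),
    (∀ i, u i ∈ S) ∧ v = ∑ i, h.smul (u i) (c i)}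

open scoped InnerProductSpace

namespace Matrix

variable {n : Type*} [Fintype n] [DecidableEq n]

open scoped MatrixOrder in
theorem PosSemidef.norm_le_re_trace {A : Matrix n n ℂ} (hA : A.PosSemidef) :
    ‖A‖ ≤ A.trace.re := by
  cases isEmpty_or_nonempty n
  · simp [Subsingleton.elim A 0]
  obtain ⟨i, hi⟩ : ‖A‖ ∈ Set.range hA.isHermitian.eigenvalues :=
    hA.isHermitian.spectrum_real_eq_range_eigenvalues ▸
      CStarAlgebra.norm_mem_spectrum_of_nonneg hA.nonneg
  rw [hA.isHermitian.trace_eq_sum_eigenvalues, ← hi, Complex.re_sum]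
  exact Finset.single_le_sum (fun j _ => hA.eigenvalues_nonneg j) (Finset.mem_univ i)

theorem IsHermitian.re_trace_le_card_mul_norm {A : Matrix n n ℂ} (hA : A.IsHermitian) :
    A.trace.re ≤ Fintype.card n * ‖A‖ := by
  cases isEmpty_or_nonempty n
  · simp
  rw [hA.trace_eq_sum_eigenvalues, Complex.re_sum]
  calc ∑ i, (hA.eigenvalues i : ℂ).re ≤ ∑ _ : n, ‖A‖ := Finset.sum_le_sum fun i _ =>
        (Real.le_norm_self _).trans
          (spectrum.norm_le_norm_of_mem (hA.eigenvalues_mem_spectrum_real i))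
    _ = Fintype.card n * ‖A‖ := by simp

theorem PosSemidef.exists_isIdempotentElem_conjTranspose_mul_mul {A : Matrix n n ℂ}
    (hA : A.PosSemidef) (hA0 : A ≠ 0) :
    ∃ c : Matrix n n ℂ, cᴴ * A * c ≠ 0 ∧ IsIdempotentElem (cᴴ * A * c) := by
  obtain ⟨i, hi⟩ : ∃ i, A i i ≠ 0 := by
    by_contra! hdiag
    exact hA0 (hA.trace_eq_zero_iff.1 (Finset.sum_eq_zero fun i _ => hdiag i))
  obtain ⟨r, hr, hri : (r : ℂ) = A i i⟩ :=
    RCLike.pos_iff_exists_ofReal.1 (hA.diag_nonneg.lt_of_ne hi.symm)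
  obtain ⟨s, hs⟩ : ∃ s : ℂ, star s * A i i * s = 1 := by
    refine ⟨((√r)⁻¹ : ℝ), ?_⟩
    have hreal : (√r)⁻¹ * r * (√r)⁻¹ = 1 := by
      field_simp
      exact (Real.sq_sqrt hr.le).symm
    rw [← hri, RCLike.star_def, Complex.conj_ofReal]
    exact_mod_cast hreal
  refine ⟨single i i s, ?_⟩
  have hc : (single i i s)ᴴ * A * single i i s = single i i 1 := by
    rw [conjTranspose_single, single_mul_mul_single, hs]
  rw [hc]
  refine ⟨fun h0 => one_ne_zero (α := ℂ) (by simpa using congrFun (congrFun h0 i) i), ?_⟩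
  simp [IsIdempotentElem]

end Matrix

namespace HilbertModuleMat

variable {m : ℕ} {M : Type*} [NormedAddCommGroup M] (h : HilbertModuleMat m M)

open Matrix

theorem smul_zero_left (c : Matrix (Fin m) (Fin m) ℂ) : h.smul 0 c = 0 := by
  simpa using h.smul_add_vec 0 0 c

theorem smul_zero_right (u : M) : h.smul u 0 = 0 := by
  simpa using h.smul_add_alg u 0 0

theorem inner_add_left (u v w : M) : h.inner (u + v) w = h.inner u w + h.inner v w := by
  rw [h.inner_conj, h.inner_add_right, star_add, ← h.inner_conj, ← h.inner_conj]

theorem inner_smul_left (u v : M) (c : Matrix (Fin m) (Fin m) ℂ) :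
    h.inner (h.smul u c) v = cᴴ * h.inner u v := by
  rw [h.inner_conj, h.inner_smul_right, star_mul, ← h.inner_conj, star_eq_conjTranspose]

def IsOrthonormal (S : Set M) : Prop :=
  (∀ q ∈ S, h.Normalized q) ∧ S.Pairwise fun q q' => h.inner q q' = 0

theorem exists_maximal_isOrthonormal : ∃ S, Maximal h.IsOrthonormal S :=
  zorn_subset _ fun c hc hchain => ⟨⋃₀ c,
    ⟨fun _ ⟨_, hs, hq⟩ => (hc hs).1 _ hq,
      (Set.pairwise_sUnion hchain.directedOn).2 fun _ hs => (hc hs).2⟩,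
    fun _ => Set.subset_sUnion_of_mem⟩

theorem IsOrthonormal.insert {S : Set M} (hS : h.IsOrthonormal S) {q : M} (hq : h.Normalized q)
    (hqS : ∀ p ∈ S, h.inner p q = 0) : h.IsOrthonormal (insert q S) := by
  refine ⟨Set.forall_mem_insert.2 ⟨hq, hS.1⟩, hS.2.insert fun p hp _ => ⟨?_, hqS p hp⟩⟩
  rw [h.inner_conj, hqS p hp, star_zero]

theorem eq_zero_of_maximal_isOrthonormal {S : Set M} (hS : Maximal h.IsOrthonormal S) {v : M}
    (hv : ∀ q ∈ S, h.inner q v = 0) : v = 0 := by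
  by_contra hv0
  obtain ⟨c, hc⟩ := (h.inner_self_posSemidef v).exists_isIdempotentElem_conjTranspose_mul_mul
    (mt (h.inner_definite v) hv0)
  have hq : h.Normalized (h.smul v c) := by
    rwa [Normalized, inner_smul_left, inner_smul_right, ← Matrix.mul_assoc]
  have hqS : ∀ p ∈ S, h.inner p (h.smul v c) = 0 := fun p hp => by
    rw [h.inner_smul_right, hv p hp, Matrix.zero_mul]
  exact hq.1 (hqS _ (hS.mem_of_prop_insert (hS.prop.insert h hq hqS)))

theorem zero_mem_matLinSpan (S : Set M) : (0 : M) ∈ matLinSpan h S :=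
  ⟨0, Fin.elim0, Fin.elim0, fun i => i.elim0, by simp⟩

theorem smul_mem_matLinSpan_of_mem {S : Set M} {q : M} (hq : q ∈ S)
    (c : Matrix (Fin m) (Fin m) ℂ) : h.smul q c ∈ matLinSpan h S :=
  ⟨1, fun _ => q, fun _ => c, fun _ => hq, by simp⟩

theorem add_mem_matLinSpan {S : Set M} {u v : M} (hu : u ∈ matLinSpan h S)
    (hv : v ∈ matLinSpan h S) : u + v ∈ matLinSpan h S := by
  obtain ⟨k, u, c, hu, rfl⟩ := hu
  obtain ⟨l, v, d, hv, rfl⟩ := hv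
  refine ⟨k + l, Fin.append u v, Fin.append c d, fun i => ?_, by simp [Fin.sum_univ_add]⟩
  exact Fin.addCases (fun j => by simpa using hu j) (fun j => by simpa using hv j) i

theorem smul_mem_matLinSpan {S : Set M} {u : M} (hu : u ∈ matLinSpan h S)
    (d : Matrix (Fin m) (Fin m) ℂ) : h.smul u d ∈ matLinSpan h S := by
  obtain ⟨k, u, c, hu, rfl⟩ := hu
  refine ⟨k, u, fun i => c i * d, hu, ?_⟩
  simp only [h.smul_mul]
  exact map_sum (AddMonoidHom.mk' (h.smul · d) fun u v => h.smul_add_vec u v d) _ _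

noncomputable section

def TraceSpace (_h : HilbertModuleMat m M) : Type _ := M

namespace TraceSpace

instance : AddCommGroup h.TraceSpace := inferInstanceAs (AddCommGroup M)

instance : SMul ℂ h.TraceSpace := ⟨fun a u => h.smul u (a • 1)⟩

instance : Module ℂ h.TraceSpace where
  one_smul u := (congrArg (h.smul u) (one_smul ℂ 1)).trans (h.smul_one u)
  mul_smul a b u := (congrArg (h.smul u) (by rw [smul_mul_smul_comm, mul_one, mul_comm])).trans
    (h.smul_mul u _ _)
  smul_zero _ := h.smul_zero_left _
  smul_add _ u v := h.smul_add_vec u v _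
  add_smul a b u := (congrArg (h.smul u) (add_smul a b 1)).trans (h.smul_add_alg u _ _)
  zero_smul u := (congrArg (h.smul u) (zero_smul ℂ 1)).trans (h.smul_zero_right u)

abbrev innerCore : InnerProductSpace.Core ℂ h.TraceSpace where
  inner u v := (h.inner u v).trace
  conj_inner_symm u v := by
    rw [h.inner_conj u v, Matrix.star_eq_conjTranspose, Matrix.trace_conjTranspose]
    exact star_star _
  re_inner_nonneg u := (Complex.nonneg_iff.1 (h.inner_self_posSemidef u).trace_nonneg).1
  add_left u v w := (congrArg Matrix.trace (h.inner_add_left u v w)).trans (Matrix.trace_add _ _)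
  smul_left u v a := (congrArg Matrix.trace (h.inner_smul_left u v (a • 1))).trans (by simp)
  definite u hu := h.inner_definite u ((h.inner_self_posSemidef u).trace_eq_zero_iff.1 hu)

instance : NormedAddCommGroup h.TraceSpace := (innerCore h).toNormedAddCommGroup

instance : InnerProductSpace ℂ h.TraceSpace := .ofCore (innerCore h).toCore

theorem inner_def (u v : h.TraceSpace) : ⟪u, v⟫_ℂ = (h.inner u v).trace := rfl

theorem norm_sq (u : h.TraceSpace) : ‖u‖ ^ 2 = (h.inner u u).trace.re :=
  (norm_sq_eq_re_inner (𝕜 := ℂ) u).trans (congrArg Complex.re (inner_def h u u))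

def equiv : h.TraceSpace ≃+ M := AddEquiv.refl M

theorem norm_equiv_le (u : h.TraceSpace) : ‖equiv h u‖ ≤ ‖u‖ := by
  rw [h.norm_eq, ← Real.sqrt_sq (norm_nonneg u), norm_sq]
  exact Real.sqrt_le_sqrt (h.inner_self_posSemidef u).norm_le_re_trace

theorem norm_le_sqrt_mul_norm_equiv (u : h.TraceSpace) : ‖u‖ ≤ √m * ‖equiv h u‖ := by
  rw [h.norm_eq, ← Real.sqrt_mul m.cast_nonneg, ← Real.sqrt_sq (norm_nonneg u), norm_sq]
  have := (h.inner_self_posSemidef u).isHermitian.re_trace_le_card_mul_norm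
  rw [Fintype.card_fin] at this
  exact Real.sqrt_le_sqrt this

def uniformEquiv : h.TraceSpace ≃ᵤ M where
  toEquiv := (equiv h).toEquiv
  uniformContinuous_toFun := AddMonoidHomClass.uniformContinuous_of_bound (equiv h) 1 fun u => by
    simpa using norm_equiv_le h u
  uniformContinuous_invFun := AddMonoidHomClass.uniformContinuous_of_bound (equiv h).symm √m
    fun u => norm_le_sqrt_mul_norm_equiv h _

instance [CompleteSpace M] : CompleteSpace h.TraceSpace := (uniformEquiv h).completeSpace_iff.2 ‹_›

end TraceSpace

def matLinSpanSubmodule (S : Set M) : Submodule ℂ h.TraceSpace where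
  carrier := (matLinSpan h S : Set M)
  zero_mem' := h.zero_mem_matLinSpan S
  add_mem' := h.add_mem_matLinSpan
  smul_mem' a _ hu := h.smul_mem_matLinSpan hu (a • 1)

theorem orthogonal_matLinSpanSubmodule_eq_bot {S : Set M} (hS : Maximal h.IsOrthonormal S) :
    (h.matLinSpanSubmodule S)ᗮ = ⊥ := by
  refine (Submodule.eq_bot_iff _).2 fun v hv => h.eq_zero_of_maximal_isOrthonormal hS fun q hq => ?_
  have hqv := (Submodule.mem_orthogonal _ v).1 hv (h.smul q (h.inner q v))
    (h.smul_mem_matLinSpan_of_mem hq _)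
  exact Matrix.trace_conjTranspose_mul_self_eq_zero_iff.1
    ((congrArg Matrix.trace (h.inner_smul_left q v _)).symm.trans hqv)

theorem dense_matLinSpan [CompleteSpace M] {S : Set M} (hS : Maximal h.IsOrthonormal S) :
    Dense (matLinSpan h S) := by
  have hdense : Dense (h.matLinSpanSubmodule S : Set h.TraceSpace) :=
    Submodule.dense_iff_topologicalClosure_eq_top.2 <| Submodule.topologicalClosure_eq_top_iff.2 <|
      h.orthogonal_matLinSpanSubmodule_eq_bot hS
  exact hdense.preimage (TraceSpace.uniformEquiv h).symm.toHomeomorph.isOpenMap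

end

end HilbertModuleMat

/-- Every Hilbert C*-module over `ℂ^{m×m}` has an orthonormal basis: an orthonormal system
whose `ℂ^{m×m}`-linear span is dense. -/
theorem exists_orthonormal_basis
    {m : ℕ} {M : Type*} [NormedAddCommGroup M] [CompleteSpace M]
    (h : HilbertModuleMat m M) :
    ∃ S : Set M,
      (∀ q ∈ S, h.Normalized q) ∧
      (∀ q ∈ S, ∀ q' ∈ S, q ≠ q' → h.inner q q' = 0) ∧
      Dense (matLinSpan h S) := by
  obtain ⟨S, hS⟩ := h.exists_maximal_isOrthonormal
  exact ⟨S, hS.prop.1, hS.prop.2, h.dense_matLinSpan hS⟩
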